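/- arXiv:1910.10565 — 3 statements merged into one kernel-verified Lean document; each statement's English description precedes it below -/
import Mathlib

section
/- For the Fisher-Snedecor F distribution with parameters m > 0, m_s > 1, γ̄ > 0, and any real n with −m < n < m_s, the n-th moment is E[γⁿ] = ((m_s−1)γ̄/m)ⁿ · B(m+n, m_s−n) / B(m, m_s). -/
/-!
With `d = (m_s - 1) γ̄`, the substitution `γ = (d / m) x` turns the moment into Euler's beta
integral of the second kind `∫₀^∞ x^(a-1) (1 + x)^(-(a+b)) dx` with `a = m + n`, `b = m_s - n`
(positive exactly when `-m < n < m_s`), and `x = t / (1 - t)` carries that to the first kind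
`∫₀¹ t^(a-1) (1 - t)^(b-1) dt = Γ(a) Γ(b) / Γ(a + b)`.
-/

open Real MeasureTheory Set

/-- Euler beta function. -/
noncomputable def eulerBeta (a b : ℝ) : ℝ := Real.Gamma a * Real.Gamma b / Real.Gamma (a + b)

theorem integral_Ioc_rpow_mul_one_sub_rpow {a b : ℝ} (ha : 0 < a) (hb : 0 < b) :
    ∫ x in Ioc (0:ℝ) 1, x ^ (a - 1) * (1 - x) ^ (b - 1) = eulerBeta a b := by
  apply Complex.ofReal_injective
  calc _ = Complex.betaIntegral a b := by
        rw [Complex.betaIntegral, intervalIntegral.integral_of_le zero_le_one,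
          ← integral_complex_ofReal]
        refine setIntegral_congr_fun measurableSet_Ioc fun x hx => ?_
        push_cast
        rw [Complex.ofReal_cpow hx.1.le, Complex.ofReal_cpow (sub_nonneg.2 hx.2)]
        push_cast; ring
    _ = _ := by
        rw [Complex.betaIntegral_eq_Gamma_mul_div _ _ (by simpa) (by simpa), eulerBeta]
        push_cast [← Complex.Gamma_ofReal]
        rfl

theorem hasDerivAt_div_one_sub {t : ℝ} (ht : t ≠ 1) :
    HasDerivAt (fun t : ℝ => t / (1 - t)) ((1 - t) ^ 2)⁻¹ t := by
  have h1 : (1:ℝ) - t ≠ 0 := sub_ne_zero.2 ht.symm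
  refine ((hasDerivAt_id' t).div ((hasDerivAt_id' t).const_sub 1) h1).congr_deriv ?_
  field_simp
  ring

theorem injOn_div_one_sub : InjOn (fun t : ℝ => t / (1 - t)) (Ioo 0 1) := by
  intro x hx y hy h
  have hx1 := (sub_pos.2 hx.2).ne'
  have hy1 := (sub_pos.2 hy.2).ne'
  field_simp at h
  linarith

theorem image_div_one_sub_Ioo : (fun t : ℝ => t / (1 - t)) '' Ioo 0 1 = Ioi 0 := by
  refine Subset.antisymm ?_ fun y (hy : 0 < y) => ?_
  · rintro _ ⟨t, ht, rfl⟩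
    exact div_pos ht.1 (sub_pos.2 ht.2)
  · refine ⟨y / (1 + y), ⟨by positivity, (div_lt_one (by positivity)).2 (by linarith)⟩, ?_⟩
    have : (1:ℝ) + y ≠ 0 := by positivity
    field_simp
    ring

theorem integral_Ioi_rpow_mul_one_add_rpow_neg {a b : ℝ} (ha : 0 < a) (hb : 0 < b) :
    ∫ x in Ioi (0:ℝ), x ^ (a - 1) * (1 + x) ^ (-(a + b)) = eulerBeta a b := by
  have hchange : ∀ t ∈ Ioo (0:ℝ) 1,
      |((1 - t) ^ 2)⁻¹| • ((t / (1 - t)) ^ (a - 1) * (1 + t / (1 - t)) ^ (-(a + b))) =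
        t ^ (a - 1) * (1 - t) ^ (b - 1) := by
    intro t ⟨ht, ht1⟩
    have hu : 0 < 1 - t := sub_pos.2 ht1
    have hinv : 1 + t / (1 - t) = (1 - t)⁻¹ := by field_simp; ring
    have hsplit : (1 - t) ^ (a + b) = (1 - t) ^ 2 * (1 - t) ^ (a - 1) * (1 - t) ^ (b - 1) := by
      rw [← rpow_natCast, ← rpow_add hu, ← rpow_add hu]
      norm_num; ring_nf
    rw [smul_eq_mul, abs_of_pos (by positivity), hinv, inv_rpow hu.le, rpow_neg hu.le, inv_inv,
      div_rpow ht.le hu.le, hsplit]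
    field_simp
  rw [← image_div_one_sub_Ioo, integral_image_eq_integral_abs_deriv_smul measurableSet_Ioo
      (fun t ht => (hasDerivAt_div_one_sub ht.2.ne).hasDerivWithinAt) injOn_div_one_sub,
    setIntegral_congr_fun measurableSet_Ioo hchange, ← integral_Ioc_eq_integral_Ioo]
  exact integral_Ioc_rpow_mul_one_sub_rpow ha hb

theorem integral_Ioi_rpow_mul_linear_rpow_neg {a b k d : ℝ} (ha : 0 < a) (hb : 0 < b)
    (hk : 0 < k) (hd : 0 < d) :
    ∫ x in Ioi (0:ℝ), x ^ (a - 1) * (k * x + d) ^ (-(a + b)) =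
      k ^ (-a) * d ^ (-b) * eulerBeta a b := by
  have hscale : ∀ x ∈ Ioi (0:ℝ), x ^ (a - 1) * (k * x + d) ^ (-(a + b)) =
      k ^ (1 - a) * d ^ (-(b + 1)) *
        ((k / d * x) ^ (a - 1) * (1 + k / d * x) ^ (-(a + b))) := by
    intro x (hx : 0 < x)
    have hlin : k * x + d = d * (1 + k / d * x) := by field_simp; ring
    have hk' : k ^ (1 - a) * k ^ (a - 1) = 1 := by
      rw [← rpow_add hk]; norm_num
    have hd' : d ^ (-(b + 1)) = d ^ (-(a + b)) * d ^ (a - 1) := by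
      rw [← rpow_add hd]; ring_nf
    rw [hlin, mul_rpow hd.le (by positivity), mul_rpow (by positivity) hx.le, div_rpow hk.le hd.le,
      hd']
    field_simp
    exact hk'.symm
  rw [setIntegral_congr_fun measurableSet_Ioi hscale, integral_const_mul,
    integral_comp_mul_left_Ioi (fun y => y ^ (a - 1) * (1 + y) ^ (-(a + b))) 0 (by positivity),
    mul_zero, integral_Ioi_rpow_mul_one_add_rpow_neg ha hb, smul_eq_mul, inv_div,
    show 1 - a = -a + 1 by ring, rpow_add_one hk.ne', show -(b + 1) = -b - 1 by ring,
    rpow_sub_one hd.ne']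
  field_simp

/-- n-th moment of the Fisher-Snedecor F distribution. -/
theorem fisher_snedecor_nth_moment (m ms γb n : ℝ) (hm : 0 < m) (hms : 1 < ms)
    (hγb : 0 < γb) (hn1 : -m < n) (hn2 : n < ms) :
    ∫ γ in Ioi (0:ℝ),
      γ ^ n * ((m ^ m * (ms - 1) ^ ms * γb ^ ms * γ ^ (m - 1)) /
        (eulerBeta m ms * (m * γ + (ms - 1) * γb) ^ (m + ms))) =
      ((ms - 1) * γb / m) ^ n * eulerBeta (m + n) (ms - n) / eulerBeta m ms := by
  have hd : 0 < (ms - 1) * γb := mul_pos (by linarith) hγb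
  have hintegrand : ∀ γ ∈ Ioi (0:ℝ),
      γ ^ n * ((m ^ m * (ms - 1) ^ ms * γb ^ ms * γ ^ (m - 1)) /
        (eulerBeta m ms * (m * γ + (ms - 1) * γb) ^ (m + ms))) =
      m ^ m * ((ms - 1) * γb) ^ ms / eulerBeta m ms *
        (γ ^ (m + n - 1) * (m * γ + (ms - 1) * γb) ^ (-(m + n + (ms - n)))) := by
    intro γ (hγ : 0 < γ)
    rw [mul_rpow (by linarith) hγb.le, show m + n - 1 = n + (m - 1) by ring, rpow_add hγ,
      show m + n + (ms - n) = m + ms by ring, rpow_neg (by positivity)]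
    field_simp
  have hm_pow : m ^ m * m ^ (-(m + n)) = (m ^ n)⁻¹ := by
    rw [← rpow_add hm, ← rpow_neg hm.le]; ring_nf
  have hd_pow : ((ms - 1) * γb) ^ ms * ((ms - 1) * γb) ^ (-(ms - n)) = ((ms - 1) * γb) ^ n := by
    rw [← rpow_add hd]; ring_nf
  rw [setIntegral_congr_fun measurableSet_Ioi hintegrand, integral_const_mul,
    integral_Ioi_rpow_mul_linear_rpow_neg (by linarith) (by linarith) hm hd,
    div_rpow hd.le hm.le, div_eq_mul_inv _ (m ^ n), ← hm_pow, ← hd_pow]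
  ring
end

section
/- The single-RV Fisher-Snedecor F moment-matching equations are consistent: if H = (1+m)(m_s−1)/(m(m_s−2)) and Y = (m_s−1)(2+m)/(m(m_s−3)) with m > 0 and m_s > 3, then m = −2(H−Y)/(H − 2Y + HY) and m_s = (4H − 3Y − 1)/(2H − Y − 1). -/
/-!
Clearing the denominators `m (m_s - 2) (m_s - 3)`, the three combinations `H - Y`,
`H - 2Y + HY` and `2H - Y - 1` of the moment expressions all factor through `m + m_s - 1`,
which is positive for `m > 0`, `m_s > 3`. So the denominators of the inversion formulas
never vanish, and the common factor cancels from both quotients.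
-/

namespace FisherSnedecor

variable {K : Type*} [Field K]

/-- The paper's `H`. -/
def normalizedSecondMoment (m ms : K) : K := (1 + m) * (ms - 1) / (m * (ms - 2))

/-- The paper's `Y`. -/
def momentRatio (m ms : K) : K := (ms - 1) * (2 + m) / (m * (ms - 3))

variable {m ms : K}

lemma normalizedSecondMoment_sub_momentRatio (hm : m ≠ 0) (h2 : ms - 2 ≠ 0) (h3 : ms - 3 ≠ 0) :
    normalizedSecondMoment m ms - momentRatio m ms =
      -((ms - 1) * (m + ms - 1)) / (m * (ms - 2) * (ms - 3)) := by
  unfold normalizedSecondMoment momentRatio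
  field_simp
  ring

lemma inversion_denominator_m (hm : m ≠ 0) (h2 : ms - 2 ≠ 0) (h3 : ms - 3 ≠ 0) :
    normalizedSecondMoment m ms - 2 * momentRatio m ms +
        normalizedSecondMoment m ms * momentRatio m ms =
      2 * (ms - 1) * (m + ms - 1) / (m ^ 2 * (ms - 2) * (ms - 3)) := by
  unfold normalizedSecondMoment momentRatio
  field_simp
  ring

lemma inversion_denominator_ms (hm : m ≠ 0) (h2 : ms - 2 ≠ 0) (h3 : ms - 3 ≠ 0) :
    2 * normalizedSecondMoment m ms - momentRatio m ms - 1 =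
      -(2 * (m + ms - 1)) / (m * (ms - 2) * (ms - 3)) := by
  unfold normalizedSecondMoment momentRatio
  field_simp
  ring

variable [NeZero (2 : K)]

theorem eq_inversion_m (hm : m ≠ 0) (h1 : ms - 1 ≠ 0) (h2 : ms - 2 ≠ 0) (h3 : ms - 3 ≠ 0)
    (hsum : m + ms - 1 ≠ 0) :
    m = -(2 * (normalizedSecondMoment m ms - momentRatio m ms)) /
      (normalizedSecondMoment m ms - 2 * momentRatio m ms +
        normalizedSecondMoment m ms * momentRatio m ms) := by
  rw [normalizedSecondMoment_sub_momentRatio hm h2 h3, inversion_denominator_m hm h2 h3]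
  field_simp

theorem eq_inversion_ms (hm : m ≠ 0) (h2 : ms - 2 ≠ 0) (h3 : ms - 3 ≠ 0)
    (hsum : m + ms - 1 ≠ 0) :
    ms = (4 * normalizedSecondMoment m ms - 3 * momentRatio m ms - 1) /
      (2 * normalizedSecondMoment m ms - momentRatio m ms - 1) := by
  have hnum : 4 * normalizedSecondMoment m ms - 3 * momentRatio m ms - 1 =
      (2 * normalizedSecondMoment m ms - momentRatio m ms - 1) +
        2 * (normalizedSecondMoment m ms - momentRatio m ms) := by ring
  rw [hnum, normalizedSecondMoment_sub_momentRatio hm h2 h3, inversion_denominator_ms hm h2 h3]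
  field_simp
  ring

end FisherSnedecor

theorem moment_matching_consistency_general (m ms H Y : ℝ) (hm : 0 < m) (hms : 3 < ms)
    (hH : H = (1 + m) * (ms - 1) / (m * (ms - 2)))
    (hY : Y = (ms - 1) * (2 + m) / (m * (ms - 3))) :
    m = -(2 * (H - Y)) / (H - 2 * Y + H * Y) ∧
    ms = (4 * H - 3 * Y - 1) / (2 * H - Y - 1) := by
  have hm0 : m ≠ 0 := hm.ne'
  have h2 : ms - 2 ≠ 0 := by linarith
  have h3 : ms - 3 ≠ 0 := by linarith
  have hsum : m + ms - 1 ≠ 0 := by linarith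
  subst hH hY
  exact ⟨FisherSnedecor.eq_inversion_m hm0 (by linarith) h2 h3 hsum,
    FisherSnedecor.eq_inversion_ms hm0 h2 h3 hsum⟩

/-- Consistency of the single-RV Fisher-Snedecor F moment-matching equations. -/
theorem moment_matching_consistency (m ms H Y : ℝ) (hm : 0 < m) (hms : 3 < ms)
    (hH : H = (1 + m) * (ms - 1) / (m * (ms - 2)))
    (hY : Y = (ms - 1) * (2 + m) / (m * (ms - 3)))
    (hden1 : H - 2 * Y + H * Y ≠ 0) (hden2 : 2 * H - Y - 1 ≠ 0) :
    m = -(2 * (H - Y)) / (H - 2 * Y + H * Y) ∧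
    ms = (4 * H - 3 * Y - 1) / (2 * H - Y - 1) :=
  moment_matching_consistency_general m ms H Y hm hms hH hY
end

section
/- Asymptotic CDF at the origin: for the Fisher-Snedecor F distribution with parameters m > 0, m_s > 1, γ̄ > 0, lim_{x→0⁺} F(x)/x^m = m^{m−1}/(B(m, m_s)((m_s−1)γ̄)^m). -/
open Real MeasureTheory Set Filter

/-!
Write the density as `γ ^ (m - 1) * G γ` with `G` continuous on `[0, ∞)`. By L'Hôpital's rule,
`(∫₀ˣ γ ^ (m - 1) G γ) / x ^ m` has the same limit as `x ^ (m - 1) G x / (m x ^ (m - 1)) = G x / m`,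
namely `G 0 / m`, and evaluating `G 0` gives the stated constant.
-/

lemma eulerBeta_pos {a b : ℝ} (ha : 0 < a) (hb : 0 < b) : 0 < eulerBeta a b :=
  div_pos (mul_pos (Gamma_pos_of_pos ha) (Gamma_pos_of_pos hb)) (Gamma_pos_of_pos (add_pos ha hb))

lemma tendsto_primitive_nhdsGT_zero {f : ℝ → ℝ} {b : ℝ} (hb : 0 < b)
    (hf : IntervalIntegrable f volume 0 b) :
    Tendsto (fun x => ∫ γ in (0:ℝ)..x, f γ) (nhdsWithin 0 (Ioi 0)) (nhds 0) := by
  have hcont : ContinuousWithinAt (fun x => ∫ γ in (0:ℝ)..x, f γ) (Icc 0 b) 0 := by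
    simpa [uIcc_of_le hb.le] using
      intervalIntegral.continuousOn_primitive_interval' hf left_mem_uIcc 0 left_mem_uIcc
  have hle : nhdsWithin (0:ℝ) (Ioi 0) ≤ nhdsWithin 0 (Icc 0 b) := by
    rw [← nhdsWithin_Ioc_eq_nhdsGT hb]
    exact nhdsWithin_mono _ Ioc_subset_Icc_self
  simpa using hcont.tendsto.mono_left hle

lemma tendsto_rpow_nhdsGT_zero {m : ℝ} (hm : 0 < m) :
    Tendsto (fun x : ℝ => x ^ m) (nhdsWithin 0 (Ioi 0)) (nhds 0) := by
  simpa [zero_rpow hm.ne'] using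
    (continuousAt_rpow_const 0 m (Or.inr hm.le)).tendsto.mono_left nhdsWithin_le_nhds

theorem tendsto_integral_rpow_mul_div_rpow {m : ℝ} {G : ℝ → ℝ} (hm : 0 < m)
    (hG : ContinuousOn G (Ici 0)) :
    Tendsto (fun x => (∫ γ in (0:ℝ)..x, γ ^ (m - 1) * G γ) / x ^ m)
      (nhdsWithin 0 (Ioi 0)) (nhds (G 0 / m)) := by
  set f : ℝ → ℝ := fun γ => γ ^ (m - 1) * G γ
  have hGat : ∀ x, 0 < x → ContinuousAt G x := fun x hx =>
    hG.continuousAt (Ici_mem_nhds hx)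
  have hfat : ∀ x, 0 < x → ContinuousAt f x := fun x hx =>
    (continuousAt_rpow_const _ _ (Or.inl hx.ne')).mul (hGat x hx)
  have hf01 : IntervalIntegrable f volume 0 1 :=
    (intervalIntegral.intervalIntegrable_rpow' (by linarith)).mul_continuousOn
      (hG.mono (by simp [Icc_subset_Ici_self]))
  have hf_deriv : ∀ x ∈ Ioo (0:ℝ) 1, HasDerivAt (fun x => ∫ γ in (0:ℝ)..x, f γ) (f x) x :=
    fun x hx => intervalIntegral.integral_hasDerivAt_right
      (hf01.mono_set (uIcc_subset_uIcc_left (by simp [hx.1.le, hx.2.le])))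
      (ContinuousAt.stronglyMeasurableAtFilter isOpen_Ioi hfat x hx.1)
      (hfat x hx.1)
  have hpow_deriv : ∀ x ∈ Ioo (0:ℝ) 1, HasDerivAt (fun x : ℝ => x ^ m) (m * x ^ (m - 1)) x :=
    fun x hx => hasDerivAt_rpow_const (Or.inl hx.1.ne')
  have hratio : Tendsto (fun x => f x / (m * x ^ (m - 1))) (nhdsWithin 0 (Ioi 0))
      (nhds (G 0 / m)) := by
    refine ((hG.continuousWithinAt self_mem_Ici).tendsto.mono_left
      (nhdsWithin_mono _ Ioi_subset_Ici_self)).div_const m |>.congr' ?_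
    filter_upwards [self_mem_nhdsWithin] with x (hx : 0 < x)
    have : 0 < x ^ (m - 1) := rpow_pos_of_pos hx _
    simp only [f]
    field_simp
  exact HasDerivAt.lhopital_zero_right_on_Ioo zero_lt_one hf_deriv hpow_deriv
    (fun x hx => (mul_pos hm (rpow_pos_of_pos hx.1 _)).ne')
    (tendsto_primitive_nhdsGT_zero zero_lt_one hf01) (tendsto_rpow_nhdsGT_zero hm) hratio

lemma continuousOn_rpow_affine_Ici {m c p : ℝ} (hm : 0 ≤ m) (hc : 0 < c) :
    ContinuousOn (fun γ : ℝ => (m * γ + c) ^ p) (Ici 0) :=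
  fun γ hγ =>
    have hpos : 0 < m * γ + c := by nlinarith [mem_Ici.mp hγ]
    (ContinuousAt.rpow_const (f := fun γ => m * γ + c) (by fun_prop)
      (Or.inl hpos.ne')).continuousWithinAt

/-- Asymptotic behavior of the Fisher-Snedecor F CDF at the origin. -/
theorem fisher_snedecor_cdf_asymptotic (m ms γb : ℝ) (hm : 0 < m) (hms : 1 < ms)
    (hγb : 0 < γb) :
    Tendsto (fun x : ℝ =>
        (∫ γ in (0:ℝ)..x,
          (m ^ m * (ms - 1) ^ ms * γb ^ ms * γ ^ (m - 1)) /
            (eulerBeta m ms * (m * γ + (ms - 1) * γb) ^ (m + ms))) / x ^ m)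
      (nhdsWithin 0 (Ioi 0))
      (nhds (m ^ (m - 1) / (eulerBeta m ms * ((ms - 1) * γb) ^ m))) := by
  set c := (ms - 1) * γb
  have hc : 0 < c := mul_pos (by linarith) hγb
  have hB : 0 < eulerBeta m ms := eulerBeta_pos hm (by linarith)
  set G : ℝ → ℝ := fun γ => m ^ m * c ^ ms / (eulerBeta m ms * (m * γ + c) ^ (m + ms))
  have hG : ContinuousOn G (Ici 0) := continuousOn_const.div
    (continuousOn_const.mul (continuousOn_rpow_affine_Ici hm.le hc))
    fun γ hγ => (mul_pos hB (rpow_pos_of_pos (by nlinarith [mem_Ici.mp hγ]) _)).ne'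
  have hG0 : G 0 / m = m ^ (m - 1) / (eulerBeta m ms * c ^ m) := by
    have hm_pow : m ^ m = m ^ (m - 1) * m := by rw [← rpow_add_one hm.ne']; ring_nf
    have : 0 < c ^ ms := rpow_pos_of_pos hc _
    simp only [G, mul_zero, zero_add, rpow_add hc, hm_pow]
    field_simp
  have hdensity : ∀ γ, m ^ m * (ms - 1) ^ ms * γb ^ ms * γ ^ (m - 1) /
      (eulerBeta m ms * (m * γ + c) ^ (m + ms)) = γ ^ (m - 1) * G γ := fun γ => by
    simp only [G, c, mul_rpow (by linarith : 0 ≤ ms - 1) hγb.le]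
    ring
  simpa only [hdensity, hG0] using tendsto_integral_rpow_mul_div_rpow hm hG
end
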